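/- arXiv:2102.03492 — 9 statements merged into one kernel-verified Lean document; each statement's English description precedes it below -/
import Mathlib

section
/- Let X be a J-poset. If S ⊆ X₁ and T ⊆ X₂ are nonempty finite sets, then there exists t ∈ X₁ \ S such that t < m for every m ∈ T. In particular, there are infinitely many w ∈ X₁ such that w < m for every m ∈ T. -/
open Order Set

/-- The minimal upper bound set of `A`: the minimal elements of the set of upper bounds. -/
def mub (X : Type*) [PartialOrder X] (A : Set X) : Set X :=
  {x ∈ upperBounds A | ∀ y ∈ upperBounds A, ¬ y < x}

/-- The set of elements of height `i` in `X`. -/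
def level (X : Type*) [PartialOrder X] (i : ℕ) : Set X :=
  {x : X | Order.height x = (i : ℕ∞)}

/-- A J-poset: a countable poset with a unique minimal element satisfying (J1)-(J4). -/
structure IsJPoset (X : Type*) [PartialOrder X] : Prop where
  countable : Countable X
  uniqueMin : ∃! x : X, IsMin x
  dim2 : Order.krullDim X = 2
  mubFinite : ∀ A : Set X, A.Nonempty → (mub X A).Finite
  j2 : ∀ x ∈ level X 1, {z : X | x < z}.Infinite
  j3 : ∀ m ∈ level X 2, ∀ F : Set X, F ⊆ level X 1 → F.Finite →
        ∃ K : Set X, K ⊆ level X 1 ∧ K.Finite ∧ Disjoint K F ∧ mub X K = {m}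
  j4 : ∀ T : Set X, T ⊆ level X 2 → T.Finite → T.Nonempty →
        ∃ t ∈ level X 1, ∀ m ∈ T, t < m

/-- `(A, B)` is a member of `Str X`. -/
def StrMem (X : Type*) [PartialOrder X] (A B : Set X) : Prop :=
  A ⊆ level X 1 ∧ B ⊆ level X 2 ∧
  ((A.Finite ∧ A.Nonempty ∧ B.Finite ∧ B.Nonempty) ∨
    (∃ x, x ∈ level X 1 ∧ A = {x} ∧ B = {z ∈ level X 2 | x < z})) ∧
  (∃ a ∈ A, ∀ b ∈ B, a < b)

/-- `(C, D)` dominates `(A, B)` via `W`. -/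
def Dominates (X : Type*) [PartialOrder X] (C D A B W : Set X) : Prop :=
  A ⊂ C ∧ D ⊆ B ∧ W ⊆ C ∧ W.Nonempty ∧
  (∀ w ∈ W, ∀ d ∈ D, w < d) ∧
  (∀ a ∈ A, ∀ m : X, a < m → (∀ w ∈ W, w < m) → m ∈ D)

/-- The order on `Str X`: `(A,B) ≤ (C,D)`. -/
def StrLE (X : Type*) [PartialOrder X] (A B C D : Set X) : Prop :=
  (A = C ∧ B = D) ∨ ∃ W : Set X, Dominates X C D A B W

/-- The strict order on `Str X`: `(A,B) < (C,D)`. -/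
def StrLT (X : Type*) [PartialOrder X] (A B C D : Set X) : Prop :=
  StrLE X A B C D ∧ ¬(A = C ∧ B = D)

/-- `ℓ(A,B)`: the number of `a ∈ A` with `a < b` for all `b ∈ B`. -/
noncomputable def ell (X : Type*) [PartialOrder X] (A B : Set X) : ℕ :=
  {a ∈ A | ∀ b ∈ B, a < b}.ncard

/-- `η(A,B) = |A| - ℓ(A,B)`. -/
noncomputable def eta (X : Type*) [PartialOrder X] (A B : Set X) : ℕ :=
  A.ncard - ell X A B

/-- `Str X` as a type of pairs. -/
abbrev Str (X : Type*) [PartialOrder X] := {p : Set X × Set X // StrMem X p.1 p.2}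

def strLE {X : Type*} [PartialOrder X] (p q : Str X) : Prop :=
  StrLE X p.1.1 p.1.2 q.1.1 q.1.2

def strLT {X : Type*} [PartialOrder X] (p q : Str X) : Prop :=
  strLE p q ∧ p ≠ q

/-- Membership in `Str_F X`: members of `Str X` with both coordinates finite. -/
def StrFMem (X : Type*) [PartialOrder X] (A B : Set X) : Prop :=
  StrMem X A B ∧ A.Finite ∧ B.Finite

/-- `Str_F X` as a type of pairs. -/
abbrev StrF (X : Type*) [PartialOrder X] := {p : Set X × Set X // StrFMem X p.1 p.2}

def strFLE {X : Type*} [PartialOrder X] (p q : StrF X) : Prop :=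
  StrLE X p.1.1 p.1.2 q.1.1 q.1.2

/-- `K_{Str_F X}(z)`: all `(K, {b}) ∈ Str_F X` with `z ∈ K` and `mub K = {b}`. -/
def KSet (X : Type*) [PartialOrder X] (z : X) : Set (StrF X) :=
  {p | z ∈ p.1.1 ∧ ∃ b : X, p.1.2 = {b} ∧ mub X p.1.1 = {b}}

/-- The three-element poset `𝕀₂`: two incomparable minimal elements below one top element,
realized as the nonempty subsets of a two-element set ordered by inclusion. -/
abbrev I2 := {s : Set (Fin 2) // s.Nonempty}

/-!
Let `W` be the set of height-one elements below every `m ∈ T`, and suppose it is finite.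
By (J3) there is a height-one `k ∉ W`, and by (J2) infinitely many `z > k`. Applying (J4) to
`T ∪ {z}` puts some element of `W` below each such `z`, so by pigeonhole a single `t ∈ W` lies
below infinitely many of them. Since `X` has dimension two, each of these `z` is a minimal upper
bound of the distinct height-one elements `t` and `k`, so `mub {t, k}` is infinite, contradicting
(J1).
-/

theorem Set.Infinite.exists_mem_infinite_sep {α β : Type*} {Z : Set α} {W : Set β}
    (hZ : Z.Infinite) (hW : W.Finite) {r : β → α → Prop} (h : ∀ z ∈ Z, ∃ t ∈ W, r t z) :
    ∃ t ∈ W, {z ∈ Z | r t z}.Infinite := by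
  by_contra! hfin
  refine hZ ((hW.biUnion hfin).subset fun z hz => ?_)
  obtain ⟨t, ht, htz⟩ := h z hz
  exact mem_biUnion ht ⟨hz, htz⟩

section Levels

variable {X : Type*} [PartialOrder X]

theorem mem_level_two_of_lt (hdim : krullDim X ≤ 2) {k z : X} (hk : k ∈ level X 1)
    (hkz : k < z) : z ∈ level X 2 := by
  have hle : (height z : WithBot ℕ∞) ≤ (2 : ℕ∞) := (height_le_krullDim z).trans hdim
  have hge : height k + 1 ≤ height z := height_add_one_le hkz
  rw [show height k = 1 from hk, one_add_one_eq_two] at hge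
  exact le_antisymm (WithBot.coe_le_coe.mp hle) hge

theorem covBy_of_height_eq_add_one {a z : X} {n : ℕ} (ha : height a = n)
    (hz : height z = n + 1) (haz : a < z) : a ⋖ z := by
  refine ⟨haz, fun y hay hyz => ?_⟩
  have h : height a + 1 + 1 ≤ height z := calc
    height a + 1 + 1 ≤ height y + 1 := by gcongr; exact height_add_one_le hay
    _ ≤ height z := height_add_one_le hyz
  rw [ha, hz] at h
  norm_cast at h
  omega

theorem mem_mub_pair_of_mem_level_two {t k z : X} (ht : t ∈ level X 1) (hk : k ∈ level X 1)
    (htk : t ≠ k) (hz : z ∈ level X 2) (htz : t < z) (hkz : k < z) : z ∈ mub X {t, k} := by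
  have cov : ∀ a ∈ level X 1, a < z → a ⋖ z := fun a ha haz =>
    covBy_of_height_eq_add_one (n := 1) ha hz haz
  refine ⟨by simp [upperBounds, htz.le, hkz.le], fun y hy hyz => htk ?_⟩
  have hyt := ((cov t ht htz).eq_or_eq (hy (mem_insert t {k})) hyz.le).resolve_right hyz.ne
  have hyk := ((cov k hk hkz).eq_or_eq (hy (mem_insert_of_mem t rfl)) hyz.le).resolve_right hyz.ne
  exact hyt.symm.trans hyk

theorem isMin_of_mem_mub_empty {m : X} (hm : m ∈ mub X ∅) : IsMin m :=
  fun y hy => not_lt_iff_le_imp_ge.mp (hm.2 y (by simp)) hy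

end Levels

namespace IsJPoset

variable {X : Type*} [PartialOrder X]

theorem exists_mem_level_one_notMem (hX : IsJPoset X) {F : Set X} (hF1 : F ⊆ level X 1)
    (hF : F.Finite) {m : X} (hm : m ∈ level X 2) : ∃ k ∈ level X 1, k ∉ F := by
  obtain ⟨K, hK1, -, hKF, hKm⟩ := hX.j3 m hm F hF1 hF
  obtain rfl | ⟨k, hkK⟩ := K.eq_empty_or_nonempty
  · have hmin : IsMin m := isMin_of_mem_mub_empty (hKm ▸ rfl)
    have h0 : height m = 0 := height_eq_zero.mpr hmin
    rw [show height m = 2 from hm] at h0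
    exact absurd h0 (by norm_num)
  · exact ⟨k, hK1 hkK, disjoint_left.mp hKF hkK⟩

theorem infinite_level_one_below (hX : IsJPoset X) {T : Set X} (hT2 : T ⊆ level X 2)
    (hTf : T.Finite) (hTne : T.Nonempty) : {w ∈ level X 1 | ∀ m ∈ T, w < m}.Infinite := by
  set W := {w ∈ level X 1 | ∀ m ∈ T, w < m}
  intro hWf
  obtain ⟨m, hm⟩ := hTne
  obtain ⟨k, hk, hkW⟩ := hX.exists_mem_level_one_notMem (fun w hw => hw.1) hWf (hT2 hm)
  have hZ2 : ∀ z, k < z → z ∈ level X 2 := fun z => mem_level_two_of_lt hX.dim2.le hk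
  have hbelow : ∀ z ∈ {z | k < z}, ∃ t ∈ W, t < z := by
    intro z hz
    obtain ⟨t, ht, htT⟩ := hX.j4 (insert z T) (insert_subset (hZ2 z hz) hT2) (hTf.insert z)
      (insert_nonempty z T)
    exact ⟨t, ⟨ht, fun m hm => htT m (mem_insert_of_mem z hm)⟩, htT z (mem_insert z T)⟩
  obtain ⟨t, htW, hinf⟩ := (hX.j2 k hk).exists_mem_infinite_sep hWf hbelow
  refine hinf.mono (fun z hz => ?_) (hX.mubFinite {t, k} (insert_nonempty t {k}))
  exact mem_mub_pair_of_mem_level_two htW.1 hk (ne_of_mem_of_not_mem htW hkW)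
    (hZ2 z hz.1) hz.2 hz.1

end IsJPoset

theorem stmt_0_general {X : Type*} [PartialOrder X] (hX : IsJPoset X)
    (S T : Set X) (hT2 : T ⊆ level X 2)
    (hSf : S.Finite) (hTf : T.Finite) (hTne : T.Nonempty) :
    (∃ t ∈ level X 1 \ S, ∀ m ∈ T, t < m) ∧
    {w ∈ level X 1 | ∀ m ∈ T, w < m}.Infinite := by
  have hW := hX.infinite_level_one_below hT2 hTf hTne
  obtain ⟨w, ⟨hw1, hwT⟩, hwS⟩ := (hW.sdiff hSf).nonempty
  exact ⟨⟨w, ⟨hw1, hwS⟩, hwT⟩, hW⟩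

/-- In a J-poset, for nonempty finite `S ⊆ X₁`, `T ⊆ X₂`, there is
`t ∈ X₁ \ S` with `t < m` for all `m ∈ T`; in particular there are infinitely many
`w ∈ X₁` with `w < m` for all `m ∈ T`. -/
theorem stmt_0 {X : Type*} [PartialOrder X] (hX : IsJPoset X)
    (S T : Set X) (hS1 : S ⊆ level X 1) (hT2 : T ⊆ level X 2)
    (hSf : S.Finite) (hTf : T.Finite) (hSne : S.Nonempty) (hTne : T.Nonempty) :
    (∃ t ∈ level X 1 \ S, ∀ m ∈ T, t < m) ∧
    {w ∈ level X 1 | ∀ m ∈ T, w < m}.Infinite :=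
  stmt_0_general hX S T hT2 hSf hTf hTne
end

section
/- Let R be a commutative Noetherian ring, let P be a prime ideal of R with height P ≥ 2, and let F be a finite set of height-one prime ideals of R. Then there exists a finite set K of height-one prime ideals of R, disjoint from F, such that in the poset of prime ideals of R ordered by inclusion, the set of minimal elements of the set of prime ideals containing every member of K is exactly {P}. -/
open Order Set

/-
Primes of height one below `P` that avoid finitely many primes not containing `P` exist: by
prime avoidance pick `x ∈ P` outside those primes and outside the (finitely many) minimal primes
of `R`; a prime minimal over `(x)` inside `P` has height one by Krull's principal ideal theorem.
Consequently the height-one primes below `P` outside `F` have exactly the primes above `P` as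
upper bounds, and since `R` is Noetherian their sum is already the sum of finitely many of them.
-/

theorem mub_eq_singleton_of_upperBounds_eq_Ici {X : Type*} [PartialOrder X] {A : Set X} {p : X}
    (h : upperBounds A = Ici p) : mub X A = {p} := by
  ext x
  simp only [mub, h, mem_Ici, mem_singleton_iff]
  constructor
  · rintro ⟨hpx, hmin⟩
    exact (hpx.lt_or_eq.resolve_left (hmin p le_rfl)).symm
  · rintro rfl
    exact ⟨le_rfl, fun y hy hyx => hy.not_gt hyx⟩

namespace PrimeSpectrum

variable {R : Type*} [CommRing R] [IsNoetherianRing R]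

theorem exists_finite_subset_upperBounds_eq (G : Set (PrimeSpectrum R)) :
    ∃ K ⊆ G, K.Finite ∧ upperBounds K = upperBounds G := by
  have hcompact : IsCompactElement (⨆ q : G, q.1.asIdeal) :=
    (Submodule.fg_iff_compact _).mp (IsNoetherian.noetherian _)
  obtain ⟨s, hs⟩ := CompleteLattice.IsCompactElement.exists_finset_of_le_iSup _ hcompact _ le_rfl
  have hsG : Subtype.val '' (s : Set G) ⊆ G := by
    rintro _ ⟨i, -, rfl⟩
    exact i.2
  refine ⟨_, hsG, s.finite_toSet.image _, subset_antisymm (fun y hy q hq => ?_)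
    (upperBounds_mono_set hsG)⟩
  have hsy : (⨆ i ∈ s, i.1.asIdeal) ≤ y.asIdeal :=
    iSup₂_le fun i hi => (asIdeal_le_asIdeal _ _).mpr (hy ⟨i, hi, rfl⟩)
  exact (asIdeal_le_asIdeal _ _).mp
    ((le_iSup (fun q : G => q.1.asIdeal) ⟨q, hq⟩).trans (hs.trans hsy))

theorem exists_height_eq_one_of_mem_of_forall_notMem_minimalPrimes {P : PrimeSpectrum R}
    {x : R} (hxP : x ∈ P.asIdeal) (hx : ∀ m ∈ minimalPrimes R, x ∉ m) :
    ∃ q : PrimeSpectrum R, x ∈ q.asIdeal ∧ q ≤ P ∧ height q = 1 := by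
  obtain ⟨q, hq, hqP⟩ := Ideal.exists_minimalPrimes_le
    ((Ideal.span_singleton_le_iff_mem _).mpr hxP)
  have hqprime := hq.isPrime
  have hxq : x ∈ q := (Ideal.span_singleton_le_iff_mem _).mp hq.1.2
  refine ⟨⟨q, hqprime⟩, hxq, hqP, ?_⟩
  rw [← height_eq_orderHeight]
  refine le_antisymm (Ideal.height_le_one_of_isPrincipal_of_mem_minimalPrimes _ q hq) ?_
  exact Order.one_le_iff_pos.mpr (pos_of_ne_zero fun h => hx q (Ideal.height_eq_zero_iff.mp h) hxq)

theorem exists_height_eq_one_le_forall_not_le {P : PrimeSpectrum R} (hP : ¬ IsMin P)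
    {S : Set (PrimeSpectrum R)} (hS : S.Finite) (hPS : ∀ s ∈ S, ¬ P ≤ s) :
    ∃ q : PrimeSpectrum R, height q = 1 ∧ q ≤ P ∧ ∀ s ∈ S, ¬ q ≤ s := by
  set T : Set (Ideal R) := asIdeal '' S ∪ minimalPrimes R
  have hT : T.Finite := (hS.image _).union (minimalPrimes.finite_of_isNoetherianRing R)
  have hTprime : ∀ I ∈ T, I.IsPrime := by
    rintro _ (⟨s, -, rfl⟩ | hm)
    exacts [s.2, hm.isPrime]
  have hPT : ∀ I ∈ T, ¬ P.asIdeal ≤ I := by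
    rintro _ (⟨s, hs, rfl⟩ | hm) hle
    · exact hPS s hs hle
    · exact hP fun z hz => (asIdeal_le_asIdeal _ _).mp
        (hle.trans (hm.2 ⟨z.2, bot_le⟩ (((asIdeal_le_asIdeal _ _).mpr hz).trans hle)))
  obtain ⟨x, hxP, hxT⟩ : ∃ x ∈ P.asIdeal, ∀ I ∈ T, x ∉ I := by
    by_contra! h
    obtain ⟨I, hI, hle⟩ := (Ideal.subset_union_prime_finite hT (f := id) ⊥ ⊥
      fun I hI _ _ => hTprime I hI).mp fun x hx => by simpa using h x hx
    exact hPT I hI hle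
  obtain ⟨q, hxq, hqP, hq⟩ := exists_height_eq_one_of_mem_of_forall_notMem_minimalPrimes hxP
    fun m hm => hxT m (Or.inr hm)
  exact ⟨q, hq, hqP, fun s hs hqs => hxT _ (Or.inl ⟨s, hs, rfl⟩) (hqs hxq)⟩

end PrimeSpectrum

/-- If `R` is a commutative Noetherian ring, `P` a prime of height at least two,
and `F` a finite set of height-one primes, then there is a finite set `K` of height-one
primes, disjoint from `F`, whose minimal upper bound set in `Spec R` is exactly `{P}`. -/
theorem stmt_1 {R : Type*} [CommRing R] [IsNoetherianRing R]
    (P : PrimeSpectrum R) (hP : 2 ≤ Order.height P)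
    (F : Set (PrimeSpectrum R)) (hFf : F.Finite)
    (hF1 : ∀ q ∈ F, Order.height q = 1) :
    ∃ K : Set (PrimeSpectrum R), K.Finite ∧ (∀ q ∈ K, Order.height q = 1) ∧
      Disjoint K F ∧ mub (PrimeSpectrum R) K = {P} := by
  have hP_not_le : ∀ y, height y ≤ 1 → ¬ P ≤ y := fun y hy hPy =>
    absurd ((hP.trans (height_mono hPy)).trans hy) (by norm_num)
  set G := {q : PrimeSpectrum R | height q = 1 ∧ q ≤ P ∧ q ∉ F}
  have hG : upperBounds G = Ici P := by
    refine subset_antisymm (fun y hy => ?_) fun y hPy q hq => hq.2.1.trans hPy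
    by_contra hPy
    obtain ⟨q, hq, hqP, hqS⟩ := PrimeSpectrum.exists_height_eq_one_le_forall_not_le
      (S := insert y F) (fun h => hP_not_le P (by rw [height_eq_zero.mpr h]; norm_num) le_rfl)
      (hFf.insert y) (by rintro s (rfl | hs); exacts [hPy, hP_not_le s (hF1 s hs).le])
    exact hqS y (mem_insert y F) (hy ⟨hq, hqP, fun hqF => hqS q (mem_insert_of_mem y hqF) le_rfl⟩)
  obtain ⟨K, hKG, hK, hKub⟩ := PrimeSpectrum.exists_finite_subset_upperBounds_eq G
  exact ⟨K, hK, fun q hq => (hKG hq).1, disjoint_left.mpr fun q hq => (hKG hq).2.2,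
    mub_eq_singleton_of_upperBounds_eq_Ici (hKub.trans hG)⟩
end

section
/- Let X be a J-poset. The relation ≤ on Str X is transitive, hence (Str X, ≤) is a partially ordered set. Specifically, if (A₁,B₁) < (A₂,B₂) and (A₂,B₂) < (A₃,B₃) in Str X, and (A₃,B₃) dominates (A₂,B₂) via W, then (A₃,B₃) dominates (A₁,B₁) via the same set W. -/
open Order Set

/-!
Domination of `(A, B)` via `W` only becomes easier when `A` shrinks and `B` grows, and
`(A, B) ≤ (C, D)` forces `A ⊆ C` and `D ⊆ B`. Hence anything dominating `(C, D)` via `W`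
dominates `(A, B)` via the same `W`, which gives transitivity; antisymmetry is the two
inclusions read in both directions.
-/

section

variable {X : Type*} [PartialOrder X] {A B C D E F W : Set X}

theorem Dominates.of_subset_of_subset {A' B' : Set X} (hA : A' ⊆ A) (hB : B ⊆ B')
    (h : Dominates X C D A B W) : Dominates X C D A' B' W :=
  let ⟨hAC, hDB, hWC, hW, hWD, hmax⟩ := h
  ⟨hA.trans_ssubset hAC, hDB.trans hB, hWC, hW, hWD,
    fun a ha m ham hWm => hmax a (hA ha) m ham hWm⟩

theorem StrLE.subset_and_subset (h : StrLE X A B C D) : A ⊆ C ∧ D ⊆ B := by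
  rcases h with ⟨rfl, rfl⟩ | ⟨W, hA, hD, -⟩
  · exact ⟨Subset.rfl, Subset.rfl⟩
  · exact ⟨hA.subset, hD⟩

theorem StrLE.refl (A B : Set X) : StrLE X A B A B :=
  Or.inl ⟨rfl, rfl⟩

theorem StrLE.antisymm (h : StrLE X A B C D) (h' : StrLE X C D A B) : A = C ∧ B = D :=
  ⟨h.subset_and_subset.1.antisymm h'.subset_and_subset.1,
    h'.subset_and_subset.2.antisymm h.subset_and_subset.2⟩

theorem StrLE.trans (h : StrLE X A B C D) (h' : StrLE X C D E F) : StrLE X A B E F := by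
  rcases h' with ⟨rfl, rfl⟩ | ⟨W, hW⟩
  · exact h
  · exact Or.inr ⟨W, hW.of_subset_of_subset h.subset_and_subset.1 h.subset_and_subset.2⟩

end

theorem stmt_2_general {X : Type*} [PartialOrder X] :
    (∀ A B : Set X, StrMem X A B → StrLE X A B A B) ∧
    (∀ A B C D : Set X, StrMem X A B → StrMem X C D →
      StrLE X A B C D → StrLE X C D A B → A = C ∧ B = D) ∧
    (∀ A B C D E F : Set X, StrMem X A B → StrMem X C D → StrMem X E F →
      StrLE X A B C D → StrLE X C D E F → StrLE X A B E F) ∧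
    (∀ A₁ B₁ A₂ B₂ A₃ B₃ W : Set X, StrMem X A₁ B₁ → StrMem X A₂ B₂ → StrMem X A₃ B₃ →
      StrLT X A₁ B₁ A₂ B₂ → Dominates X A₃ B₃ A₂ B₂ W → Dominates X A₃ B₃ A₁ B₁ W) :=
  ⟨fun A B _ => StrLE.refl A B,
    fun _ _ _ _ _ _ h h' => h.antisymm h',
    fun _ _ _ _ _ _ _ _ _ h h' => h.trans h',
    fun _ _ _ _ _ _ _ _ _ _ hlt hdom =>
      hdom.of_subset_of_subset hlt.1.subset_and_subset.1 hlt.1.subset_and_subset.2⟩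

/-- The relation `≤` on `Str X` is reflexive, antisymmetric and transitive,
hence a partial order; and specifically if `(A₁,B₁) < (A₂,B₂)` and `(A₃,B₃)` dominates
`(A₂,B₂)` via `W`, then `(A₃,B₃)` dominates `(A₁,B₁)` via the same set `W`. -/
theorem stmt_2 {X : Type*} [PartialOrder X] (hX : IsJPoset X) :
    (∀ A B : Set X, StrMem X A B → StrLE X A B A B) ∧
    (∀ A B C D : Set X, StrMem X A B → StrMem X C D →
      StrLE X A B C D → StrLE X C D A B → A = C ∧ B = D) ∧
    (∀ A B C D E F : Set X, StrMem X A B → StrMem X C D → StrMem X E F →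
      StrLE X A B C D → StrLE X C D E F → StrLE X A B E F) ∧
    (∀ A₁ B₁ A₂ B₂ A₃ B₃ W : Set X, StrMem X A₁ B₁ → StrMem X A₂ B₂ → StrMem X A₃ B₃ →
      StrLT X A₁ B₁ A₂ B₂ → Dominates X A₃ B₃ A₂ B₂ W → Dominates X A₃ B₃ A₁ B₁ W) :=
  stmt_2_general
end

section
/- Let X be a J-poset, let (A,B) ∈ Str X, let b ∈ B, and let K ⊆ X₁ be a finite set disjoint from A with mub(K) = {b}. Then (A ∪ K, {b}) ∈ Str X and (A,B) < (A ∪ K, {b}) in Str X; in fact (A ∪ K, {b}) dominates (A,B) via K. -/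
open Order Set

/-! Elements of `K` have height one and `b` height two, so they lie strictly below `b`. Since
`dim X = 2`, every element strictly above a height-one element is maximal; hence an element
`m` strictly above all of `K` is itself a minimal upper bound of `K` (a smaller upper bound
would have to be an element of `K`, which would then be the only minimal upper bound instead
of `b`), and so `m = b`. This is (E3); the other conditions are bookkeeping. -/

section Levels

variable {X : Type*} [PartialOrder X]

lemma height_le_of_krullDim_le {n : ℕ} (hX : krullDim X ≤ n) (x : X) : height x ≤ n :=
  WithBot.coe_le_coe.mp ((height_le_krullDim x).trans hX)

lemma disjoint_level {i j : ℕ} (hij : i ≠ j) : Disjoint (level X i) (level X j) :=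
  Set.disjoint_left.mpr fun _ hi hj => hij (by exact_mod_cast hi.symm.trans hj)

lemma not_isMin_of_mem_level_succ {i : ℕ} {x : X} (hx : x ∈ level X (i + 1)) : ¬IsMin x := by
  rw [← height_eq_zero, show height x = ((i + 1 : ℕ) : ℕ∞) from hx]
  exact_mod_cast i.succ_ne_zero

lemma isMax_of_mem_level_one_of_lt (hX : krullDim X ≤ 2) {w y : X} (hw : w ∈ level X 1)
    (hwy : w < y) : IsMax y := by
  intro z hyz
  by_contra hzy
  have h3 : height w + 1 + 1 ≤ height z := calc
    height w + 1 + 1 ≤ height y + 1 := by gcongr; exact height_add_one_le hwy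
    _ ≤ height z := height_add_one_le (lt_of_le_not_ge hyz hzy)
  rw [show height w = ((1 : ℕ) : ℕ∞) from hw] at h3
  have h2 := height_le_of_krullDim_le hX z
  norm_num at h3 h2
  exact absurd (h3.trans h2) (by decide)

end Levels

section MinimalUpperBounds

variable {X : Type*} [PartialOrder X]

lemma isMin_of_mem_mub_empty_s3 {x : X} (hx : x ∈ mub X ∅) : IsMin x :=
  fun y hyx => (hyx.lt_or_eq.resolve_left (hx.2 y (by simp))).ge

lemma mem_mub_of_mem_of_mem_upperBounds {A : Set X} {y : X} (hyA : y ∈ A)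
    (hy : y ∈ upperBounds A) : y ∈ mub X A :=
  ⟨hy, fun _ hz hzy => (hz hyA).not_gt hzy⟩

lemma lt_of_mem_mub_of_notMem {K : Set X} {w b : X} (hw : w ∈ K) (hb : b ∈ mub X K)
    (hbK : b ∉ K) : w < b :=
  (hb.1 hw).lt_of_ne fun h => hbK (h ▸ hw)

lemma eq_of_forall_lt_of_mub_eq_singleton (hX : krullDim X ≤ 2) {K : Set X} {w b m : X}
    (hK1 : K ⊆ level X 1) (hw : w ∈ K) (hmub : mub X K = {b}) (hbK : b ∉ K)
    (hm : ∀ k ∈ K, k < m) : m = b := by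
  suffices m ∈ mub X K by rwa [hmub] at this
  refine ⟨fun k hk => (hm k hk).le, fun y hy hym => ?_⟩
  rcases (hy hw).eq_or_lt with rfl | hwy
  · have : w ∈ mub X K := mem_mub_of_mem_of_mem_upperBounds hw hy
    rw [hmub, Set.mem_singleton_iff] at this
    exact hbK (this ▸ hw)
  · exact (isMax_of_mem_level_one_of_lt hX (hK1 hw) hwy).not_lt hym

end MinimalUpperBounds

section Str

variable {X : Type*} [PartialOrder X]

lemma StrMem.finite_nonempty {A B : Set X} (h : StrMem X A B) : A.Finite ∧ A.Nonempty := by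
  rcases h.2.2.1 with ⟨hf, hne, -⟩ | ⟨x, -, rfl, -⟩
  · exact ⟨hf, hne⟩
  · exact ⟨Set.finite_singleton x, Set.singleton_nonempty x⟩

lemma StrMem.union_singleton {A B K : Set X} {b : X} (h : StrMem X A B) (hb : b ∈ B)
    (hK1 : K ⊆ level X 1) (hKf : K.Finite) : StrMem X (A ∪ K) {b} := by
  obtain ⟨hAf, hAne⟩ := h.finite_nonempty
  obtain ⟨hA1, hB2, -, a, haA, ha⟩ := h
  refine ⟨Set.union_subset hA1 hK1, Set.singleton_subset_iff.mpr (hB2 hb), ?_, ?_⟩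
  · exact Or.inl ⟨hAf.union hKf, hAne.mono Set.subset_union_left,
      Set.finite_singleton b, Set.singleton_nonempty b⟩
  · exact ⟨a, Set.mem_union_left K haA, fun d hd => hd ▸ ha b hb⟩

lemma strLT_of_dominates {A B C D W : Set X} (h : Dominates X C D A B W) : StrLT X A B C D :=
  ⟨Or.inr ⟨W, h⟩, fun hAC => h.1.ne hAC.1⟩

end Str

/-- If `(A,B) ∈ Str X`, `b ∈ B`, and `K ⊆ X₁` is a finite set disjoint from `A`
with `mub K = {b}`, then `(A ∪ K, {b}) ∈ Str X`, `(A,B) < (A ∪ K, {b})`, and in fact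
`(A ∪ K, {b})` dominates `(A,B)` via `K`. -/
theorem stmt_3 {X : Type*} [PartialOrder X] (hX : IsJPoset X)
    (A B : Set X) (hAB : StrMem X A B) (b : X) (hb : b ∈ B)
    (K : Set X) (hK1 : K ⊆ level X 1) (hKf : K.Finite) (hdisj : Disjoint K A)
    (hmub : mub X K = {b}) :
    StrMem X (A ∪ K) {b} ∧ StrLT X A B (A ∪ K) {b} ∧
    Dominates X (A ∪ K) {b} A B K := by
  have hdim : krullDim X ≤ 2 := hX.dim2.le
  have hb2 : b ∈ level X 2 := hAB.2.1 hb
  have hbmub : b ∈ mub X K := hmub ▸ rfl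
  have hbK : b ∉ K := fun h => (disjoint_level (by norm_num)).notMem_of_mem_left (hK1 h) hb2
  obtain ⟨w, hw⟩ : K.Nonempty := by
    by_contra! hK
    subst hK
    exact not_isMin_of_mem_level_succ (i := 1) hb2 (isMin_of_mem_mub_empty_s3 hbmub)
  have hdom : Dominates X (A ∪ K) {b} A B K := by
    refine ⟨Set.ssubset_union_left_iff.mpr ?_, Set.singleton_subset_iff.mpr hb,
      Set.subset_union_right, ⟨w, hw⟩, ?_, ?_⟩
    · exact fun hKA => Set.disjoint_left.mp hdisj hw (hKA hw)
    · rintro k hk d rfl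
      exact lt_of_mem_mub_of_notMem hk hbmub hbK
    · exact fun _ _ m _ hm => eq_of_forall_lt_of_mub_eq_singleton hdim hK1 hw hmub hbK hm
  exact ⟨hAB.union_singleton hb hK1 hKf, strLT_of_dominates hdom, hdom⟩
end

section
/- Let X be a J-poset. For every a ∈ X₁, the element ({a}, {z ∈ X₂ : z > a}) has height 0 in Str X; that is, the only element of Str X that is ≤ ({a}, {z ∈ X₂ : z > a}) is ({a}, {z ∈ X₂ : z > a}) itself. Consequently, if (A,B) ∈ Str X has height greater than 0 in Str X, then B is finite. -/
open Order Set

/-!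
Strictly below `(A, B)` in `Str X` lie only pairs `(C, D)` with `C ⊊ A`. For `A = {a}` this
forces `C = ∅`, which no member of `Str X` has; and the only members of `Str X` with `B`
infinite are of this singleton form.
-/

lemma StrMem.nonempty_left {X : Type*} [PartialOrder X] {A B : Set X} (h : StrMem X A B) :
    A.Nonempty :=
  let ⟨a, ha, _⟩ := h.2.2.2
  ⟨a, ha⟩

lemma StrMem.eq_of_strLE_singleton {X : Type*} [PartialOrder X] {C D B : Set X} {a : X}
    (hCD : StrMem X C D) (hle : StrLE X C D {a} B) : C = {a} ∧ D = B := by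
  rcases hle with heq | ⟨_, hdom⟩
  · exact heq
  · have hC : C = ∅ := ssubset_singleton_iff.mp hdom.1
    exact absurd hC hCD.nonempty_left.ne_empty

theorem stmt_4_general {X : Type*} [PartialOrder X] :
    (∀ a ∈ level X 1, ∀ C D : Set X, StrMem X C D →
      StrLE X C D {a} {z ∈ level X 2 | a < z} →
      C = {a} ∧ D = {z ∈ level X 2 | a < z}) ∧
    (∀ A B : Set X, StrMem X A B →
      (∃ C D : Set X, StrMem X C D ∧ StrLT X C D A B) → B.Finite) := by
  refine ⟨fun a _ C D hCD hle => hCD.eq_of_strLE_singleton hle, ?_⟩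
  rintro A B hAB ⟨C, D, hCD, hle, hne⟩
  rcases hAB.2.2.1 with ⟨-, -, hB, -⟩ | ⟨x, -, rfl, rfl⟩
  · exact hB
  · exact absurd (hCD.eq_of_strLE_singleton hle) hne

/-- For every `a ∈ X₁`, the element `({a}, {z ∈ X₂ : z > a})` has height `0`
in `Str X` (the only element of `Str X` below it is itself); consequently, if
`(A,B) ∈ Str X` has height greater than `0` in `Str X`, then `B` is finite. -/
theorem stmt_4 {X : Type*} [PartialOrder X] (hX : IsJPoset X) :
    (∀ a ∈ level X 1, ∀ C D : Set X, StrMem X C D →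
      StrLE X C D {a} {z ∈ level X 2 | a < z} →
      C = {a} ∧ D = {z ∈ level X 2 | a < z}) ∧
    (∀ A B : Set X, StrMem X A B →
      (∃ C D : Set X, StrMem X C D ∧ StrLT X C D A B) → B.Finite) :=
  stmt_4_general
end

section
/- Let X be a J-poset and let (A,B) ∈ Str X. Then (A,B) has height greater than 0 in Str X if and only if B = mub(K) for some K ⊆ A. -/
open Order Set

/-! If `B = mub K` with `K ⊆ A`, then `K` has two distinct elements, because the minimal upper
bounds of a subsingleton of `X₁` have height at most one. Elements of one level are pairwise
incomparable, so every element of `K` then lies strictly below every upper bound of `K`, and,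
as `dim X = 2`, every element strictly above all of `K` is a minimal upper bound. Hence
`({k}, B) < (A, B)` via `W = K` for any `k ∈ K`.

Conversely, let `(A, B)` dominate `(C, D) ∈ Str X` via `W` and let `c ∈ C` lie below all of `D`.
Then `A` has two elements, so `B` is finite, and by (J2) and (E3) `W` contains an element other
than `c`. Now (E3) says that the upper bounds of `K = {c} ∪ W` are exactly `B`, and since `B` is
an antichain, `B = mub K`. -/

section Levels

variable {X : Type*} [PartialOrder X]

theorem height_lt_top_of_mem_level {i : ℕ} {x : X} (hx : x ∈ level X i) : height x < ⊤ := by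
  rw [show height x = i from hx]; exact ENat.natCast_lt_top i

theorem not_lt_of_mem_level {i : ℕ} {x y : X} (hx : x ∈ level X i) (hy : y ∈ level X i) :
    ¬ x < y := fun hxy => by
  simpa [show height x = i from hx, show height y = i from hy] using
    height_strictMono hxy (height_lt_top_of_mem_level hx)

theorem eq_of_le_of_mem_level {i : ℕ} {x y : X} (hx : x ∈ level X i) (hy : y ∈ level X i)
    (hxy : x ≤ y) : x = y :=
  hxy.eq_of_not_lt (not_lt_of_mem_level hx hy)

theorem mem_level_succ_of_lt {i : ℕ} (hdim : krullDim X ≤ (i + 1 : ℕ)) {x y : X}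
    (hx : x ∈ level X i) (hxy : x < y) : y ∈ level X (i + 1) := by
  have hlt := height_strictMono hxy (height_lt_top_of_mem_level hx)
  rw [show height x = i from hx] at hlt
  have hle : height y ≤ (i + 1 : ℕ) := by exact_mod_cast (height_le_krullDim y).trans hdim
  exact le_antisymm hle (by push_cast; exact add_one_le_of_lt hlt)

theorem nontrivial_of_mem_mub_of_mem_level_two {K : Set X} (hK : K ⊆ level X 1) {b : X}
    (hb : b ∈ mub X K) (hb2 : b ∈ level X 2) : K.Nontrivial := by
  by_contra hK1
  rcases (Set.not_nontrivial_iff.mp hK1).eq_empty_or_singleton with rfl | ⟨k, rfl⟩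
  · obtain ⟨y, hy⟩ := not_isMin_iff.mp fun hmin => by
      have h0 : height b = 0 := height_eq_zero.mpr hmin
      rw [show height b = 2 from hb2] at h0
      exact two_ne_zero h0
    exact hb.2 y (by simp) hy
  · obtain rfl : k = b := (hb.1 rfl).eq_of_not_lt (hb.2 k (by simp) ·)
    exact absurd ((hK rfl).symm.trans hb2 : (1 : ℕ∞) = 2) (by decide)

theorem lt_of_mem_upperBounds_of_nontrivial {i : ℕ} {K : Set X} (hK : K ⊆ level X i)
    (hKnt : K.Nontrivial) {m : X} (hm : m ∈ upperBounds K) {k : X} (hk : k ∈ K) : k < m := by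
  refine (hm hk).lt_of_ne fun hkm => ?_
  subst hkm
  obtain ⟨k₁, hk₁, k₂, hk₂, hne⟩ := hKnt
  exact hne ((eq_of_le_of_mem_level (hK hk₁) (hK hk) (hm hk₁)).trans
    (eq_of_le_of_mem_level (hK hk₂) (hK hk) (hm hk₂)).symm)

theorem mub_eq_of_upperBounds_eq {i : ℕ} {K B : Set X} (hB : B ⊆ level X i)
    (h : upperBounds K = B) : mub X K = B := by
  subst h
  ext b
  exact ⟨And.left, fun hb => ⟨hb, fun y hy => not_lt_of_mem_level (hB hy) (hB hb)⟩⟩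

theorem mem_mub_of_forall_lt (hdim : krullDim X ≤ 2) {K : Set X} (hK : K ⊆ level X 1)
    (hKnt : K.Nontrivial) {m : X} (hm : ∀ k ∈ K, k < m) : m ∈ mub X K := by
  obtain ⟨k, hk⟩ := hKnt.nonempty
  refine ⟨fun k hk => (hm k hk).le, fun y hy hym => ?_⟩
  have hy2 := mem_level_succ_of_lt hdim (hK hk) (lt_of_mem_upperBounds_of_nontrivial hK hKnt hy hk)
  exact not_lt_of_mem_level hy2 (mem_level_succ_of_lt hdim (hK hk) (hm k hk)) hym

end Levels

section Str

variable {X : Type*} [PartialOrder X] {A B : Set X}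

theorem StrMem.finite_right_of_nontrivial (h : StrMem X A B) (hA : A.Nontrivial) : B.Finite := by
  rcases h.2.2.1 with ⟨-, -, hB, -⟩ | ⟨x, -, rfl, -⟩
  · exact hB
  · exact absurd hA Set.not_nontrivial_singleton

theorem StrMem.nonempty_right (hX : IsJPoset X) (h : StrMem X A B) : B.Nonempty := by
  rcases h.2.2.1 with ⟨-, -, -, hB⟩ | ⟨x, hx, -, rfl⟩
  · exact hB
  · obtain ⟨z, hxz⟩ := (hX.j2 x hx).nonempty
    exact ⟨z, mem_level_succ_of_lt hX.dim2.le hx hxz, hxz⟩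

theorem exists_subset_mub_eq_of_dominates (hX : IsJPoset X) (hAB : StrMem X A B)
    {C D W : Set X} (hCD : StrMem X C D) (h : Dominates X A B C D W) :
    ∃ K ⊆ A, B = mub X K := by
  obtain ⟨hCA, hBD, hWA, -, hWB, hE3⟩ := h
  obtain ⟨-, -, -, c, hcC, hcD⟩ := hCD
  have hcA : c ∈ A := hCA.subset hcC
  have hc1 : c ∈ level X 1 := hAB.1 hcA
  have hBfin : B.Finite := by
    obtain ⟨a, haA, haC⟩ := Set.exists_of_ssubset hCA
    exact hAB.finite_right_of_nontrivial
      (Set.nontrivial_of_mem_mem_ne haA hcA (ne_of_mem_of_not_mem hcC haC).symm)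
  -- if `W ⊆ {c}`, (E3) would put the infinitely many elements above `c` into `B`
  obtain ⟨w, hwW, hwc⟩ : ∃ w ∈ W, w ≠ c := by
    by_contra! hWc
    exact hX.j2 c hc1 (hBfin.subset fun m hcm => hE3 c hcC m hcm fun w hw => hWc w hw ▸ hcm)
  have hK1 : insert c W ⊆ level X 1 := Set.insert_subset hc1 (hWA.trans hAB.1)
  have hKnt : (insert c W).Nontrivial :=
    Set.nontrivial_of_mem_mem_ne (mem_insert _ _) (mem_insert_of_mem _ hwW) hwc.symm
  refine ⟨insert c W, Set.insert_subset hcA hWA, (mub_eq_of_upperBounds_eq hAB.2.1 ?_).symm⟩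
  ext m
  constructor
  · intro hm
    have hlt : ∀ k ∈ insert c W, k < m := fun _ hk =>
      lt_of_mem_upperBounds_of_nontrivial hK1 hKnt hm hk
    exact hE3 c hcC m (hlt c (mem_insert _ _)) fun w hw => hlt w (mem_insert_of_mem _ hw)
  · rintro hm k (rfl | hk)
    · exact (hcD m (hBD hm)).le
    · exact (hWB k hk m hm).le

theorem exists_strLT_of_mub_eq (hX : IsJPoset X) (hAB : StrMem X A B) {K : Set X}
    (hKA : K ⊆ A) (hBK : B = mub X K) : ∃ C D, StrMem X C D ∧ StrLT X C D A B := by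
  obtain ⟨b, hb⟩ := hAB.nonempty_right hX
  have hK1 : K ⊆ level X 1 := hKA.trans hAB.1
  have hKnt : K.Nontrivial :=
    nontrivial_of_mem_mub_of_mem_level_two hK1 (hBK ▸ hb) (hAB.2.1 hb)
  have hKB : ∀ k ∈ K, ∀ b ∈ B, k < b := fun k hk b hb =>
    lt_of_mem_upperBounds_of_nontrivial hK1 hKnt (hBK ▸ hb).1 hk
  obtain ⟨k, hk, k', hk', hkk'⟩ := id hKnt
  have hkA : {k} ⊂ A :=
    ⟨singleton_subset_iff.mpr (hKA hk), fun h => hkk' (h (hKA hk')).symm⟩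
  refine ⟨{k}, B, ⟨singleton_subset_iff.mpr (hK1 hk), hAB.2.1,
    Or.inl ⟨finite_singleton k, singleton_nonempty k,
      hAB.finite_right_of_nontrivial (hKnt.mono hKA), b, hb⟩, k, rfl, hKB k hk⟩,
    Or.inr ⟨K, hkA, subset_rfl, hKA, hKnt.nonempty, hKB, fun _ _ m _ hm => ?_⟩,
    fun h => hkA.ne h.1⟩
  exact hBK ▸ mem_mub_of_forall_lt hX.dim2.le hK1 hKnt hm

end Str

/-- `(A,B) ∈ Str X` has height greater than `0` in `Str X` if and only if
`B = mub K` for some `K ⊆ A`. -/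
theorem stmt_6 {X : Type*} [PartialOrder X] (hX : IsJPoset X)
    (A B : Set X) (hAB : StrMem X A B) :
    (∃ C D : Set X, StrMem X C D ∧ StrLT X C D A B) ↔
    (∃ K : Set X, K ⊆ A ∧ B = mub X K) := by
  constructor
  · rintro ⟨C, D, hCD, ⟨hAC, hBD⟩ | ⟨W, hdom⟩, hne⟩
    · exact absurd ⟨hAC, hBD⟩ hne
    · exact exists_subset_mub_eq_of_dominates hX hAB hCD hdom
  · rintro ⟨K, hKA, hBK⟩
    exact exists_strLT_of_mub_eq hX hAB hKA hBK
end

section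
/- Let X be a J-poset, let B ⊆ X₂ be finite and nonempty, and let (A,B) ∈ (Str X)_B with height_B(A,B) > 0. Then the number of elements of (Str X)_B that are ≤ (A,B) equals (2^{ℓ(A,B)} − 1) · 2^{η(A,B)}. -/
open Order Set

/-!
Positive height supplies some `(C, B) < (A, B)`, and its witness, enlarged by an element of `C`
below all of `B`, is a single witness `V ⊆ A` with everything above `V` lying in `B`. With this
`V`, `(C, B) ≤ (A, B)` holds exactly when `C ⊆ A` contains an element below all of `B`, so the
pairs below `(A, B)` are the subsets of `A` meeting a fixed `ℓ(A,B)`-element subset.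
-/

lemma ncard_powerset_diff_powerset_diff {α : Type*} {A L : Set α} (hA : A.Finite) (hLA : L ⊆ A) :
    (𝒫 A \ 𝒫 (A \ L)).ncard = (2 ^ L.ncard - 1) * 2 ^ (A.ncard - L.ncard) := by
  have hsub : 𝒫 (A \ L) ⊆ 𝒫 A := powerset_mono.2 sdiff_subset
  have hLle : L.ncard ≤ A.ncard := ncard_le_ncard hLA hA
  rw [ncard_sdiff hsub (hA.sdiff.powerset), ncard_powerset A hA, ncard_powerset _ hA.sdiff,
    ncard_sdiff hLA (hA.subset hLA), Nat.sub_mul, one_mul, ← pow_add, Nat.add_sub_cancel' hLle]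

section StrCount

variable {X : Type*} [PartialOrder X]

/-- `A` has at least two elements, so `(A, B)` is not of the form `({x}, {z ∈ X₂ : z > x})`. -/
lemma StrMem.finite_of_ssubset {A B C : Set X} (hAB : StrMem X A B) (hC : C.Nonempty)
    (hCA : C ⊂ A) : A.Finite ∧ B.Finite ∧ B.Nonempty := by
  rcases hAB.2.2.1 with ⟨hA, -, hB, hBne⟩ | ⟨x, -, rfl, -⟩
  · exact ⟨hA, hB, hBne⟩
  · exact absurd (hC.subset_singleton_iff.1 hCA.subset) hCA.ne

/-- Adjoining to the witness an element `a₀ ∈ C` below all of `B` makes (E3) independent of `a`: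
everything above the enlarged witness lies in `B`. -/
lemma Dominates.exists_witness_upperBounds_subset {A B C W : Set X} (hC : StrMem X C B)
    (hdom : Dominates X A B C B W) :
    ∃ V ⊆ A, V.Nonempty ∧ (∀ v ∈ V, ∀ b ∈ B, v < b) ∧ ∀ m, (∀ v ∈ V, v < m) → m ∈ B := by
  obtain ⟨hCA, -, hWA, -, hWB, hE3⟩ := hdom
  obtain ⟨a₀, ha₀C, ha₀B⟩ := hC.2.2.2
  refine ⟨insert a₀ W, insert_subset (hCA.subset ha₀C) hWA, insert_nonempty _ _, ?_, ?_⟩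
  · rintro v (rfl | hv) b hb
    exacts [ha₀B b hb, hWB v hv b hb]
  · intro m hm
    exact hE3 a₀ ha₀C m (hm a₀ (mem_insert _ _)) fun w hw => hm w (mem_insert_of_mem _ hw)

lemma setOf_strLE_eq_powerset_diff {A B V : Set X} (hAB : StrMem X A B) (hA : A.Finite)
    (hB : B.Finite) (hBne : B.Nonempty) (hVA : V ⊆ A) (hVne : V.Nonempty)
    (hVB : ∀ v ∈ V, ∀ b ∈ B, v < b) (hVup : ∀ m, (∀ v ∈ V, v < m) → m ∈ B) :
    {C : Set X | StrMem X C B ∧ StrLE X C B A B}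
      = 𝒫 A \ 𝒫 (A \ {a ∈ A | ∀ b ∈ B, a < b}) := by
  ext C
  simp only [mem_ofPred_eq, mem_sdiff, mem_powerset_iff, subset_sdiff, not_and,
    not_disjoint_iff]
  constructor
  · rintro ⟨hC, hCle⟩
    have hCA : C ⊆ A := by
      rcases hCle with ⟨rfl, -⟩ | ⟨W, hW⟩
      exacts [subset_rfl, hW.1.subset]
    obtain ⟨a, haC, haB⟩ := hC.2.2.2
    exact ⟨hCA, fun _ => ⟨a, haC, hCA haC, haB⟩⟩
  · rintro ⟨hCA, hmeet⟩
    obtain ⟨a, haC, -, haB⟩ := hmeet hCA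
    refine ⟨⟨hCA.trans hAB.1, hAB.2.1, Or.inl ⟨hA.subset hCA, ⟨a, haC⟩, hB, hBne⟩,
      a, haC, haB⟩, ?_⟩
    by_cases hCeq : C = A
    · exact Or.inl ⟨hCeq, rfl⟩
    · exact Or.inr ⟨V, hCA.ssubset_of_ne hCeq, subset_rfl, hVA, hVne, hVB,
        fun _ _ m _ hm => hVup m hm⟩

end StrCount

theorem stmt_8_general {X : Type*} [PartialOrder X]
    (B : Set X)
    (A : Set X) (hAB : StrMem X A B)
    (hpos : ∃ C : Set X, StrMem X C B ∧ StrLT X C B A B) :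
    {C : Set X | StrMem X C B ∧ StrLE X C B A B}.ncard
      = (2 ^ ell X A B - 1) * 2 ^ eta X A B := by
  obtain ⟨C, hC, hCle, hCne⟩ := hpos
  obtain ⟨W, hdom⟩ : ∃ W, Dominates X A B C B W :=
    hCle.resolve_left fun h => hCne ⟨h.1, rfl⟩
  obtain ⟨hA, hB, hBne⟩ :=
    hAB.finite_of_ssubset (hC.2.2.2.imp fun _ h => h.1) hdom.1
  obtain ⟨V, hVA, hVne, hVB, hVup⟩ := hdom.exists_witness_upperBounds_subset hC
  rw [setOf_strLE_eq_powerset_diff hAB hA hB hBne hVA hVne hVB hVup,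
    ncard_powerset_diff_powerset_diff hA (sep_subset _ _)]
  rfl

/-- If `B ⊆ X₂` is finite and nonempty and `(A,B) ∈ (Str X)_B` has height
greater than `0` in `(Str X)_B`, then the number of elements of `(Str X)_B` below `(A,B)`
equals `(2^{ℓ(A,B)} - 1) * 2^{η(A,B)}`. -/
theorem stmt_8 {X : Type*} [PartialOrder X] (hX : IsJPoset X)
    (B : Set X) (hB2 : B ⊆ level X 2) (hBf : B.Finite) (hBne : B.Nonempty)
    (A : Set X) (hAB : StrMem X A B)
    (hpos : ∃ C : Set X, StrMem X C B ∧ StrLT X C B A B) :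
    {C : Set X | StrMem X C B ∧ StrLE X C B A B}.ncard
      = (2 ^ ell X A B - 1) * 2 ^ eta X A B :=
  stmt_8_general B A hAB hpos
end

section
/- Let X and Y be J-posets and let φ: Str X → Str Y be an isomorphism of posets. If φ(A₁, {m₁}) and φ(A₂, {m₂}) both lie in (Str Y)_{{n}} for some m₁, m₂ ∈ X₂, n ∈ Y₂, and sets A₁, A₂ ⊆ X₁, then m₁ = m₂. Moreover, if φ(A, M) ∈ (Str Y)_{{n}} for some (A,M) ∈ Str X, then M = {m} is a singleton. -/
open Order Set

/-!
Axiom J3 lets one enlarge the first ordinate of any `(A, M) ∈ Str X` with `m ∈ M` by a set `K`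
avoiding `A` with `mub K = {m}`; then `(A ∪ K, {m})` dominates `(A, M)` via `K`. So any two
elements of `(Str Y)_{{n}}` have a common strict upper bound, and second ordinates shrink, but stay
nonempty, along strict inequalities. Pulling back a common strict upper bound of `φ(A₁, {m₁})` and
`φ(A₂, {m₂})` gives an element whose second ordinate lies in `{m₁} ∩ {m₂}`. For the second claim,
raise `(A, M)` to `(C, {m})` and `(C', {m'})` for `m, m' ∈ M`: their images lie strictly above
`φ(A, M)`, hence in `(Str Y)_{{n}}`, and the first claim gives `m = m'`.
-/

namespace IsJPoset

variable {X : Type*} [PartialOrder X]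

section Height

variable (hdim : krullDim X ≤ 2)
include hdim

lemma height_le_two (x : X) : height x ≤ 2 :=
  WithBot.coe_le_coe.mp ((height_le_krullDim x).trans hdim)

lemma mem_level_two_of_lt {x z : X} (hx : x ∈ level X 1) (hxz : x < z) : z ∈ level X 2 := by
  refine le_antisymm (height_le_two hdim z) ?_
  have h := height_add_one_le hxz
  rw [show height x = 1 from hx] at h
  exact h

lemma not_lt_of_mem_level_two {z y : X} (hz : z ∈ level X 2) : ¬ z < y := fun hzy => by
  have h := (height_add_one_le hzy).trans (height_le_two hdim y)
  rw [show height z = 2 from hz] at h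
  exact absurd h (by decide)

end Height

lemma lt_of_le_of_mem_level {a b : X} (ha : a ∈ level X 1) (hb : b ∈ level X 2) (hab : a ≤ b) :
    a < b :=
  hab.lt_of_ne fun h => by
    have h' : ((1 : ℕ) : ℕ∞) = (2 : ℕ) := ha.symm.trans (h ▸ hb)
    exact absurd h' (by decide)

lemma nonempty_of_mub_eq_singleton {K : Set X} {m : X} (hm : m ∈ level X 2)
    (hK : mub X K = {m}) : K.Nonempty := by
  rw [Set.nonempty_iff_ne_empty]
  rintro rfl
  obtain ⟨y, hy⟩ := not_isMin_iff.mp fun hmin : IsMin m => by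
    have h : ((0 : ℕ) : ℕ∞) = (2 : ℕ) := hmin.height_eq_zero.symm.trans hm
    exact absurd h (by decide)
  exact (hK.symm ▸ Set.mem_singleton m : m ∈ mub X ∅).2 y (by simp) hy

/-- A strict upper bound of `K ⊆ X₁` is a minimal upper bound, since nothing lies strictly
between an element of `X₁` and an element of `X₂`. -/
lemma eq_of_forall_lt_of_mub_eq_singleton (hdim : krullDim X ≤ 2) {K : Set X} {m z : X}
    (hK : K ⊆ level X 1) (hm : m ∈ level X 2) (hKm : mub X K = {m}) (hz : ∀ k ∈ K, k < z) :
    z = m := by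
  have hmub : m ∈ mub X K := hKm.symm ▸ Set.mem_singleton m
  obtain ⟨k, hk⟩ := nonempty_of_mub_eq_singleton hm hKm
  by_contra hzm
  obtain ⟨y, hyK, hyz⟩ : ∃ y ∈ upperBounds K, y < z := by
    by_contra! h
    have hzK : z ∈ mub X K := ⟨fun k hk => (hz k hk).le, h⟩
    rw [hKm] at hzK
    exact hzm hzK
  obtain rfl : k = y := (hyK hk).eq_of_not_lt fun hky =>
    not_lt_of_mem_level_two hdim (mem_level_two_of_lt hdim (hK hk) hky) hyz
  exact hmub.2 k hyK (lt_of_le_of_mem_level (hK hk) hm (hmub.1 hk))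

end IsJPoset

namespace Str

variable {X : Type*} [PartialOrder X]

lemma fst_finite (p : Str X) : p.1.1.Finite := by
  rcases p.2.2.2.1 with ⟨h, -⟩ | ⟨x, -, hA, -⟩
  · exact h
  · exact hA ▸ Set.finite_singleton x

lemma snd_nonempty (hX : IsJPoset X) (p : Str X) : p.1.2.Nonempty := by
  rcases p.2.2.2.1 with ⟨-, -, -, h⟩ | ⟨x, hx, -, hB⟩
  · exact h
  · obtain ⟨z, hz⟩ := (hX.j2 x hx).nonempty
    exact ⟨z, hB ▸ ⟨IsJPoset.mem_level_two_of_lt hX.dim2.le hx hz, hz⟩⟩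

lemma strLE_antisymm {p q : Str X} (hpq : strLE p q) (hqp : strLE q p) : p = q := by
  rcases hpq with ⟨hA, hB⟩ | ⟨_, hW⟩
  · exact Subtype.ext (Prod.ext hA hB)
  rcases hqp with ⟨hA, hB⟩ | ⟨_, hW'⟩
  · exact Subtype.ext (Prod.ext hA.symm hB.symm)
  · exact absurd (hW.1.trans hW'.1) (ssubset_irrefl _)

lemma snd_subset_of_strLT {p q : Str X} (h : strLT p q) : q.1.2 ⊆ p.1.2 := by
  rcases h with ⟨⟨hA, hB⟩ | ⟨_, hW⟩, hne⟩
  · exact absurd (Subtype.ext (Prod.ext hA hB)) hne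
  · exact hW.2.1

lemma snd_eq_singleton_of_strLT (hX : IsJPoset X) {p q : Str X} {n : X} (h : strLT p q)
    (hp : p.1.2 = {n}) : q.1.2 = {n} :=
  (Set.subset_singleton_iff_eq.mp (hp ▸ snd_subset_of_strLT h)).resolve_left
    (snd_nonempty hX q).ne_empty

end Str

namespace IsJPoset

variable {X : Type*} [PartialOrder X]

lemma exists_strLT_of_snd_mem (hX : IsJPoset X) {A : Set X} (hA : A ⊆ level X 1)
    (hAfin : A.Finite) {m : X} (hm : m ∈ level X 2) :
    ∃ r : Str X, r.1.2 = {m} ∧ ∀ p : Str X, p.1.1 ⊆ A → m ∈ p.1.2 → strLT p r := by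
  obtain ⟨K, hK, hKfin, hKA, hKm⟩ := hX.j3 m hm A hA hAfin
  obtain ⟨k, hk⟩ := nonempty_of_mub_eq_singleton hm hKm
  have hKlt : ∀ k ∈ K, k < m := fun k hk =>
    lt_of_le_of_mem_level (hK hk) hm ((hKm.symm ▸ Set.mem_singleton m : m ∈ mub X K).1 hk)
  have hr : StrMem X (A ∪ K) {m} :=
    ⟨Set.union_subset hA hK, Set.singleton_subset_iff.mpr hm,
      Or.inl ⟨hAfin.union hKfin, ⟨k, Or.inr hk⟩, Set.finite_singleton m,
        Set.singleton_nonempty m⟩,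
      ⟨k, Or.inr hk, fun b hb => hb ▸ hKlt k hk⟩⟩
  refine ⟨⟨(A ∪ K, {m}), hr⟩, rfl, fun p hpA hmp => ?_⟩
  have hdom : Dominates X (A ∪ K) {m} p.1.1 p.1.2 K :=
    ⟨(Set.ssubset_iff_of_subset (hpA.trans Set.subset_union_left)).mpr
        ⟨k, Or.inr hk, fun hkp => Set.disjoint_left.mp hKA hk (hpA hkp)⟩,
      Set.singleton_subset_iff.mpr hmp, Set.subset_union_right, ⟨k, hk⟩,
      fun w hw d hd => hd ▸ hKlt w hw,
      fun _ _ z _ hz => eq_of_forall_lt_of_mub_eq_singleton hX.dim2.le hK hm hKm hz⟩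
  refine ⟨Or.inr ⟨K, hdom⟩, fun hpr => hdom.1.ne ?_⟩
  rw [hpr]

lemma exists_strLT_strLT_of_snd_eq_singleton (hX : IsJPoset X) {n : X} (hn : n ∈ level X 2)
    {q₁ q₂ : Str X} (h₁ : q₁.1.2 = {n}) (h₂ : q₂.1.2 = {n}) :
    ∃ r : Str X, strLT q₁ r ∧ strLT q₂ r := by
  obtain ⟨r, -, hr⟩ := hX.exists_strLT_of_snd_mem (Set.union_subset q₁.2.1 q₂.2.1)
    (q₁.fst_finite.union q₂.fst_finite) hn
  exact ⟨r, hr q₁ Set.subset_union_left (h₁ ▸ rfl), hr q₂ Set.subset_union_right (h₂ ▸ rfl)⟩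

end IsJPoset

section StrIso

variable {X Y : Type*} [PartialOrder X] [PartialOrder Y] {φ : Str X → Str Y}

lemma strLT_iff_of_strLE_iff (hφ : ∀ p q : Str X, strLE p q ↔ strLE (φ p) (φ q))
    {p q : Str X} : strLT p q ↔ strLT (φ p) (φ q) := by
  refine and_congr (hφ p q) (not_congr ⟨congrArg φ, fun h => ?_⟩)
  exact Str.strLE_antisymm ((hφ p q).mpr (h ▸ Or.inl ⟨rfl, rfl⟩))
    ((hφ q p).mpr (h ▸ Or.inl ⟨rfl, rfl⟩))

lemma eq_of_map_snd_eq_singleton (hX : IsJPoset X) (hY : IsJPoset Y)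
    (hφsurj : Function.Surjective φ) (hφ : ∀ p q : Str X, strLE p q ↔ strLE (φ p) (φ q))
    {m₁ m₂ : X} {n : Y} (hn : n ∈ level Y 2) {p₁ p₂ : Str X} (hp₁ : p₁.1.2 = {m₁})
    (hp₂ : p₂.1.2 = {m₂}) (h₁ : (φ p₁).1.2 = {n}) (h₂ : (φ p₂).1.2 = {n}) : m₁ = m₂ := by
  obtain ⟨q, hq₁, hq₂⟩ := hY.exists_strLT_strLT_of_snd_eq_singleton hn h₁ h₂
  obtain ⟨r, rfl⟩ := hφsurj q
  obtain ⟨z, hz⟩ := r.snd_nonempty hX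
  have hz₁ := Str.snd_subset_of_strLT ((strLT_iff_of_strLE_iff hφ).mpr hq₁) hz
  have hz₂ := Str.snd_subset_of_strLT ((strLT_iff_of_strLE_iff hφ).mpr hq₂) hz
  rw [hp₁] at hz₁
  rw [hp₂] at hz₂
  exact hz₁.symm.trans hz₂

end StrIso

/-- If `φ : Str X → Str Y` is an isomorphism and `φ(A₁,{m₁})`, `φ(A₂,{m₂})`
both lie in `(Str Y)_{{n}}`, then `m₁ = m₂`; moreover, if `φ(A,M) ∈ (Str Y)_{{n}}`, then `M`
is a singleton. -/
theorem stmt_11 {X Y : Type*} [PartialOrder X] [PartialOrder Y]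
    (hX : IsJPoset X) (hY : IsJPoset Y)
    (φ : Str X → Str Y) (hφsurj : Function.Surjective φ)
    (hφord : ∀ p q : Str X, strLE p q ↔ strLE (φ p) (φ q)) :
    (∀ (m₁ m₂ : X) (n : Y), m₁ ∈ level X 2 → m₂ ∈ level X 2 → n ∈ level Y 2 →
      ∀ p₁ p₂ : Str X, p₁.1.2 = {m₁} → p₂.1.2 = {m₂} →
        (φ p₁).1.2 = {n} → (φ p₂).1.2 = {n} → m₁ = m₂) ∧
    (∀ (n : Y), n ∈ level Y 2 → ∀ p : Str X, (φ p).1.2 = {n} →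
      ∃ m : X, p.1.2 = {m}) := by
  refine ⟨fun m₁ m₂ n _ _ hn p₁ p₂ hp₁ hp₂ h₁ h₂ =>
    eq_of_map_snd_eq_singleton hX hY hφsurj hφord hn hp₁ hp₂ h₁ h₂, fun n hn p hp => ?_⟩
  obtain ⟨m, hm⟩ := p.snd_nonempty hX
  refine ⟨m, Set.eq_singleton_iff_unique_mem.mpr ⟨hm, fun m' hm' => ?_⟩⟩
  obtain ⟨r₁, hr₁, hpr₁⟩ := hX.exists_strLT_of_snd_mem p.2.1 p.fst_finite (p.2.2.1 hm')
  obtain ⟨r₂, hr₂, hpr₂⟩ := hX.exists_strLT_of_snd_mem p.2.1 p.fst_finite (p.2.2.1 hm)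
  have himage : ∀ {r : Str X}, strLT p r → (φ r).1.2 = {n} := fun h =>
    Str.snd_eq_singleton_of_strLT hY ((strLT_iff_of_strLE_iff hφord).mp h) hp
  exact eq_of_map_snd_eq_singleton hX hY hφsurj hφord hn hr₁ hr₂
    (himage (hpr₁ p subset_rfl hm')) (himage (hpr₂ p subset_rfl hm))
end

section
/- Let X and Y be J-posets and let φ: Str X → Str Y be an isomorphism of posets. Then there exists a bijection ρ₂: X₂ → Y₂ such that for every (A,B) ∈ Str X, if φ(A,B) = (S,T) then T = ρ₂(B) (the image of B under ρ₂). Moreover, for every finite nonempty B ⊆ X₂, the restriction of φ to (Str X)_B is an isomorphism of posets from (Str X)_B onto (Str Y)_{ρ₂(B)}. -/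
/-!
Two elements of `Str X` have a common upper bound iff their second coordinates meet: given
`m` in both, (J3) supplies a fresh finite `K ⊆ X₁` with `mub K = {m}`, and adding `K` to both
first coordinates dominates both pairs via `K`. Hence the pairs whose second coordinate is a
singleton are exactly those `p` for which "compatible with `p`" is a transitive relation, a
property preserved by the order isomorphism `φ`. So `φ` sends pairs with second coordinate `{m}`
to pairs with second coordinate `{ρ₂ m}`, and `m ∈ B` iff `(A, B)` is compatible with such a
pair iff `ρ₂ m` lies in the second coordinate of `φ (A, B)`.
-/

open Order Set

section JPoset

variable {X : Type*} [PartialOrder X]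

lemma height_le_two (hX : IsJPoset X) (x : X) : height x ≤ 2 := by
  have h := height_le_krullDim x
  rw [hX.dim2] at h
  exact WithBot.coe_le_coe.mp h

lemma height_lt_of_mem_level {x : X} {i : ℕ} (hx : x ∈ level X i) {y : X} (hxy : x < y) :
    (i : ℕ∞) < height y :=
  hx ▸ height_strictMono hxy (hx ▸ ENat.natCast_lt_top i)

lemma mem_level_two_of_lt_s15 (hX : IsJPoset X) {x y : X} (hx : x ∈ level X 1) (hxy : x < y) :
    y ∈ level X 2 := by
  have h := height_lt_of_mem_level hx hxy
  refine le_antisymm (height_le_two hX y) ?_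
  exact (ENat.add_one_le_iff ENat.one_ne_top).2 h

lemma not_lt_of_mem_level_two (hX : IsJPoset X) {x y : X} (hx : x ∈ level X 2) : ¬ x < y :=
  fun hxy => (height_lt_of_mem_level hx hxy).not_ge (height_le_two hX y)

lemma ne_of_mem_level_one_of_mem_level_two {x m : X} (hx : x ∈ level X 1)
    (hm : m ∈ level X 2) : x ≠ m := by
  rintro rfl
  exact absurd (hx.symm.trans hm) (by decide)

section Mub

variable {K : Set X} {m : X}

lemma mem_mub_of_mub_eq_singleton (h : mub X K = {m}) : m ∈ mub X K :=
  h ▸ mem_singleton m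

lemma nonempty_of_mub_eq_singleton (hm : m ∈ level X 2) (h : mub X K = {m}) : K.Nonempty := by
  rw [Set.nonempty_iff_ne_empty]
  rintro rfl
  have hm_not_min : ¬ IsMin m := fun hmin =>
    absurd ((height_eq_zero.2 hmin).symm.trans hm) (by decide)
  obtain ⟨b, hbm⟩ := not_isMin_iff.1 hm_not_min
  exact (mem_mub_of_mub_eq_singleton h).2 b (by simp) hbm

lemma lt_of_mub_eq_singleton (hK : K ⊆ level X 1) (hm : m ∈ level X 2) (h : mub X K = {m})
    {k : X} (hk : k ∈ K) : k < m :=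
  ((mem_mub_of_mub_eq_singleton h).1 hk).lt_of_ne
    (ne_of_mem_level_one_of_mem_level_two (hK hk) hm)

lemma eq_of_mub_eq_singleton (hX : IsJPoset X) (hK : K ⊆ level X 1) (hm : m ∈ level X 2)
    (h : mub X K = {m}) {m' : X} (hm' : ∀ k ∈ K, k < m') : m' = m := by
  obtain ⟨k, hk⟩ := nonempty_of_mub_eq_singleton hm h
  suffices m' ∈ mub X K by rwa [h] at this
  refine ⟨fun z hz => (hm' z hz).le, fun y hy hym' => ?_⟩
  rcases (hy hk).eq_or_lt with rfl | hky
  · -- an upper bound lying in `K` is itself a minimal upper bound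
    have hk_mub : k ∈ mub X K := ⟨hy, fun z hz hzk => (hz hk).not_gt hzk⟩
    rw [h] at hk_mub
    exact ne_of_mem_level_one_of_mem_level_two (hK hk) hm hk_mub
  · exact not_lt_of_mem_level_two hX (mem_level_two_of_lt_s15 hX (hK hk) hky) hym'

lemma strMem_of_mub_eq_singleton (hK : K ⊆ level X 1) (hm : m ∈ level X 2)
    (h : mub X K = {m}) {C : Set X} (hC : C ⊆ level X 1) (hCfin : C.Finite) (hKC : K ⊆ C) :
    StrMem X C {m} := by
  obtain ⟨k, hk⟩ := nonempty_of_mub_eq_singleton hm h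
  refine ⟨hC, singleton_subset_iff.2 hm,
    Or.inl ⟨hCfin, ⟨k, hKC hk⟩, finite_singleton m, singleton_nonempty m⟩, k, hKC hk, ?_⟩
  rintro _ rfl
  exact lt_of_mub_eq_singleton hK hm h hk

lemma dominates_of_mub_eq_singleton (hX : IsJPoset X) (hK : K ⊆ level X 1)
    (hm : m ∈ level X 2) (h : mub X K = {m}) {A B C : Set X} (hAC : A ⊆ C) (hKC : K ⊆ C)
    (hKA : Disjoint K A) (hmB : m ∈ B) : Dominates X C {m} A B K := by
  obtain ⟨k, hk⟩ := nonempty_of_mub_eq_singleton hm h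
  refine ⟨ssubset_of_subset_of_ne hAC ?_, singleton_subset_iff.2 hmB, hKC, ⟨k, hk⟩, ?_, ?_⟩
  · rintro rfl
    exact disjoint_left.1 hKA hk (hKC hk)
  · rintro w hw _ rfl
    exact lt_of_mub_eq_singleton hK hm h hw
  · exact fun _ _ m' _ hm' => eq_of_mub_eq_singleton hX hK hm h hm'

end Mub

lemma str_fst_subset (p : Str X) : p.1.1 ⊆ level X 1 := p.2.1

lemma str_snd_subset (p : Str X) : p.1.2 ⊆ level X 2 := p.2.2.1

lemma str_fst_finite (p : Str X) : p.1.1.Finite := by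
  rcases p.2.2.2.1 with h | ⟨x, -, hA, -⟩
  · exact h.1
  · exact hA ▸ finite_singleton x

lemma str_snd_nonempty (hX : IsJPoset X) (p : Str X) : p.1.2.Nonempty := by
  rcases p.2.2.2.1 with h | ⟨x, hx, -, hB⟩
  · exact h.2.2.2
  · obtain ⟨z, hz⟩ := (hX.j2 x hx).nonempty
    exact ⟨z, hB ▸ ⟨mem_level_two_of_lt_s15 hX hx hz, hz⟩⟩

lemma snd_subset_of_strLE {p q : Str X} (h : strLE p q) : q.1.2 ⊆ p.1.2 := by
  rcases h with ⟨-, hB⟩ | ⟨W, hW⟩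
  · exact hB.ge
  · exact hW.2.1

lemma exists_str_snd_eq_singleton (hX : IsJPoset X) {m : X} (hm : m ∈ level X 2) :
    ∃ p : Str X, p.1.2 = {m} := by
  obtain ⟨K, hK, hKfin, -, hKm⟩ := hX.j3 m hm ∅ (empty_subset _) finite_empty
  exact ⟨⟨(K, {m}), strMem_of_mub_eq_singleton hK hm hKm hK hKfin subset_rfl⟩, rfl⟩

def StrCompatible (p q : Str X) : Prop :=
  ∃ r : Str X, strLE p r ∧ strLE q r

lemma strCompatible_of_mem_snd (hX : IsJPoset X) {p q : Str X} {m : X} (hmp : m ∈ p.1.2)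
    (hmq : m ∈ q.1.2) : StrCompatible p q := by
  have hm := str_snd_subset p hmp
  have hF := union_subset (str_fst_subset p) (str_fst_subset q)
  have hFfin := (str_fst_finite p).union (str_fst_finite q)
  obtain ⟨K, hK, hKfin, hKF, hKm⟩ := hX.j3 m hm _ hF hFfin
  have hKC : K ⊆ p.1.1 ∪ q.1.1 ∪ K := subset_union_right
  let r : Str X := ⟨(p.1.1 ∪ q.1.1 ∪ K, {m}),
    strMem_of_mub_eq_singleton hK hm hKm (union_subset hF hK) (hFfin.union hKfin) hKC⟩
  refine ⟨r, Or.inr ⟨K, ?_⟩, Or.inr ⟨K, ?_⟩⟩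
  · exact dominates_of_mub_eq_singleton hX hK hm hKm (subset_union_left.trans subset_union_left)
      hKC (hKF.mono_right subset_union_left) hmp
  · exact dominates_of_mub_eq_singleton hX hK hm hKm (subset_union_right.trans subset_union_left)
      hKC (hKF.mono_right subset_union_right) hmq

lemma strCompatible_iff (hX : IsJPoset X) (p q : Str X) :
    StrCompatible p q ↔ (p.1.2 ∩ q.1.2).Nonempty := by
  refine ⟨fun ⟨r, hpr, hqr⟩ => ?_, fun ⟨m, hmp, hmq⟩ => strCompatible_of_mem_snd hX hmp hmq⟩
  obtain ⟨b, hb⟩ := str_snd_nonempty hX r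
  exact ⟨b, snd_subset_of_strLE hpr hb, snd_subset_of_strLE hqr hb⟩

lemma strCompatible_iff_mem_snd (hX : IsJPoset X) (p : Str X) {q : Str X} {m : X}
    (hq : q.1.2 = {m}) : StrCompatible p q ↔ m ∈ p.1.2 := by
  simp [strCompatible_iff hX, hq]

lemma snd_eq_singleton_iff (hX : IsJPoset X) (p : Str X) :
    (∃ m, p.1.2 = {m}) ↔
      ∀ q r : Str X, StrCompatible p q → StrCompatible p r → StrCompatible q r := by
  constructor
  · rintro ⟨m, hm⟩ q r hpq hpr
    simp only [strCompatible_iff hX, hm, singleton_inter_nonempty] at hpq hpr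
    exact strCompatible_of_mem_snd hX hpq hpr
  · intro h
    obtain ⟨m, hm⟩ := str_snd_nonempty hX p
    refine ⟨m, eq_singleton_iff_unique_mem.2 ⟨hm, fun m' hm' => ?_⟩⟩
    obtain ⟨q, hq⟩ := exists_str_snd_eq_singleton hX (str_snd_subset p hm')
    obtain ⟨r, hr⟩ := exists_str_snd_eq_singleton hX (str_snd_subset p hm)
    have hqr := h q r ((strCompatible_iff_mem_snd hX p hq).2 hm')
      ((strCompatible_iff_mem_snd hX p hr).2 hm)
    rw [strCompatible_iff_mem_snd hX q hr, hq] at hqr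
    exact (eq_of_mem_singleton hqr).symm

end JPoset

section Transfer

variable {X Y : Type*} [PartialOrder X] [PartialOrder Y] {φ : Str X → Str Y}

lemma strCompatible_map_iff (hφsurj : Function.Surjective φ)
    (hφord : ∀ p q : Str X, strLE p q ↔ strLE (φ p) (φ q)) (p q : Str X) :
    StrCompatible p q ↔ StrCompatible (φ p) (φ q) := by
  constructor
  · rintro ⟨r, hpr, hqr⟩
    exact ⟨φ r, (hφord p r).1 hpr, (hφord q r).1 hqr⟩
  · rintro ⟨r', hpr, hqr⟩
    obtain ⟨r, rfl⟩ := hφsurj r'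
    exact ⟨r, (hφord p r).2 hpr, (hφord q r).2 hqr⟩

lemma snd_eq_singleton_iff_map (hX : IsJPoset X) (hY : IsJPoset Y)
    (hφsurj : Function.Surjective φ) (hφord : ∀ p q : Str X, strLE p q ↔ strLE (φ p) (φ q))
    (p : Str X) : (∃ m, p.1.2 = {m}) ↔ ∃ y, (φ p).1.2 = {y} := by
  simp only [snd_eq_singleton_iff hX, snd_eq_singleton_iff hY, hφsurj.forall,
    ← strCompatible_map_iff hφsurj hφord]

lemma mem_snd_iff_mem_snd_map (hX : IsJPoset X) (hY : IsJPoset Y)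
    (hφsurj : Function.Surjective φ) (hφord : ∀ p q : Str X, strLE p q ↔ strLE (φ p) (φ q))
    {p' : Str X} {m : X} {y : Y} (hp' : p'.1.2 = {m}) (hφp' : (φ p').1.2 = {y}) (p : Str X) :
    m ∈ p.1.2 ↔ y ∈ (φ p).1.2 := by
  rw [← strCompatible_iff_mem_snd hX p hp', ← strCompatible_iff_mem_snd hY (φ p) hφp']
  exact strCompatible_map_iff hφsurj hφord p p'

lemma exists_bijOn_image_snd_map (hX : IsJPoset X) (hY : IsJPoset Y)
    (hφsurj : Function.Surjective φ) (hφord : ∀ p q : Str X, strLE p q ↔ strLE (φ p) (φ q)) :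
    ∃ ρ : X → Y, BijOn ρ (level X 2) (level Y 2) ∧ ∀ p : Str X, (φ p).1.2 = ρ '' p.1.2 := by
  have hρ : ∀ m ∈ level X 2, ∃ y : Y, ∃ p : Str X, p.1.2 = {m} ∧ (φ p).1.2 = {y} := by
    intro m hm
    obtain ⟨p, hp⟩ := exists_str_snd_eq_singleton hX hm
    obtain ⟨y, hy⟩ := (snd_eq_singleton_iff_map hX hY hφsurj hφord p).1 ⟨m, hp⟩
    exact ⟨y, p, hp, hy⟩
  have : Nonempty Y := hY.uniqueMin.exists.nonempty
  choose! ρ pρ hpρ hφpρ using hρ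
  have hmem : ∀ p : Str X, ∀ m ∈ level X 2, m ∈ p.1.2 ↔ ρ m ∈ (φ p).1.2 := fun p m hm =>
    mem_snd_iff_mem_snd_map hX hY hφsurj hφord (hpρ m hm) (hφpρ m hm) p
  have hmaps : MapsTo ρ (level X 2) (level Y 2) := fun m hm =>
    str_snd_subset (φ (pρ m hm)) ((hmem _ m hm).1 (by simp [hpρ m hm]))
  have hinj : InjOn ρ (level X 2) := by
    intro m hm m' hm' hρmm'
    simpa [hpρ m' hm', hφpρ m' hm', hρmm'] using hmem (pρ m' hm') m hm
  have hsurj : SurjOn ρ (level X 2) (level Y 2) := by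
    intro y hy
    obtain ⟨q, hq⟩ := exists_str_snd_eq_singleton hY hy
    obtain ⟨p, rfl⟩ := hφsurj q
    obtain ⟨m, hp⟩ := (snd_eq_singleton_iff_map hX hY hφsurj hφord p).2 ⟨y, hq⟩
    have hm : m ∈ level X 2 := str_snd_subset p (by simp [hp])
    exact ⟨m, hm, by simpa [hp, hq] using hmem p m hm⟩
  refine ⟨ρ, ⟨hmaps, hinj, hsurj⟩, fun p => ?_⟩
  ext y
  constructor
  · intro hy
    obtain ⟨m, hm, rfl⟩ := hsurj (str_snd_subset (φ p) hy)
    exact ⟨m, (hmem p m hm).2 hy, rfl⟩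
  · rintro ⟨m, hmp, rfl⟩
    exact (hmem p m (str_snd_subset p hmp)).1 hmp

end Transfer

/-- If `φ : Str X → Str Y` is an isomorphism, then there is a bijection
`ρ₂ : X₂ → Y₂` such that the second coordinate of `φ(A,B)` is `ρ₂(B)` for all
`(A,B) ∈ Str X`, and for every finite nonempty `B ⊆ X₂`, `φ` restricts to an isomorphism
from `(Str X)_B` onto `(Str Y)_{ρ₂(B)}`. -/
theorem stmt_15 {X Y : Type*} [PartialOrder X] [PartialOrder Y]
    (hX : IsJPoset X) (hY : IsJPoset Y)
    (φ : Str X → Str Y) (hφsurj : Function.Surjective φ)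
    (hφord : ∀ p q : Str X, strLE p q ↔ strLE (φ p) (φ q)) :
    ∃ ρ₂ : X → Y,
      Set.MapsTo ρ₂ (level X 2) (level Y 2) ∧
      Set.InjOn ρ₂ (level X 2) ∧
      Set.SurjOn ρ₂ (level X 2) (level Y 2) ∧
      (∀ p : Str X, (φ p).1.2 = ρ₂ '' p.1.2) ∧
      (∀ B : Set X, B ⊆ level X 2 → B.Finite → B.Nonempty →
        (∀ p : Str X, p.1.2 = B → (φ p).1.2 = ρ₂ '' B) ∧
        (∀ q : Str Y, q.1.2 = ρ₂ '' B → ∃ p : Str X, p.1.2 = B ∧ φ p = q)) := by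
  obtain ⟨ρ, ⟨hmaps, hinj, hsurj⟩, himage⟩ := exists_bijOn_image_snd_map hX hY hφsurj hφord
  refine ⟨ρ, hmaps, hinj, hsurj, himage, fun B hB _ _ => ⟨fun p hp => hp ▸ himage p, ?_⟩⟩
  intro q hq
  obtain ⟨p, rfl⟩ := hφsurj q
  refine ⟨p, ?_, rfl⟩
  exact (hinj.image_eq_image_iff (str_snd_subset p) hB).1 ((himage p).symm.trans hq)
end
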